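/- arXiv:1808.08068 — 2 statements merged into one kernel-verified Lean document; each statement's English description precedes it below -/
import Mathlib

section
/- Let L > 0, λ > 0, γ > 0. Consider g(v) = L·v − γ·ln(v + γ/λ) on [0,1]. If L ≤ γλ/(γ+λ) then g is minimized on [0,1] at v = 1; if L ≥ λ then g is minimized at v = 0; otherwise g is minimized at v = γ/L − γ/λ, which lies in the open interval (0,1). -/
/-!
On `(-c, ∞)` the map `g v = L v - γ log (v + c)` is convex, so it lies above each of its tangent
lines: `g v ≥ g w + (L - γ / (w + c)) (v - w)`. Hence `w` minimizes `g` on `[0, 1]` as soon as the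
slope `L - γ / (w + c)` has the sign of `v - w` for every `v ∈ [0, 1]`. With `c = γ / λ` the slope
at `1` is `L - γλ / (γ + λ)`, the slope at `0` is `L - λ`, and it vanishes at `w = γ / L - γ / λ`.
-/

open Real Set

lemma Real.log_sub_log_le_sub_div {x y : ℝ} (hx : 0 < x) (hy : 0 < y) :
    log x - log y ≤ (x - y) / y := by
  have h := log_le_sub_one_of_pos (div_pos hx hy)
  rwa [log_div hx.ne' hy.ne', div_sub_one hy.ne'] at h

lemma tangent_le_mul_sub_mul_log {L γ c v w : ℝ} (hγ : 0 ≤ γ) (hv : 0 < v + c) (hw : 0 < w + c) :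
    L * w - γ * log (w + c) + (L - γ / (w + c)) * (v - w) ≤ L * v - γ * log (v + c) := by
  have hlog := mul_le_mul_of_nonneg_left (log_sub_log_le_sub_div hv hw) hγ
  have hexpand : γ * ((v + c - (w + c)) / (w + c)) = γ / (w + c) * (v - w) := by ring
  linarith

lemma isMinOn_mul_sub_mul_log {L γ c w : ℝ} {s : Set ℝ} (hγ : 0 ≤ γ)
    (hs : ∀ v ∈ s, 0 < v + c) (hw : w ∈ s) (hslope : ∀ v ∈ s, 0 ≤ (L - γ / (w + c)) * (v - w)) :
    IsMinOn (fun v => L * v - γ * log (v + c)) s w := fun v hv =>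
  (le_add_of_nonneg_right (hslope v hv)).trans
    (tangent_le_mul_sub_mul_log hγ (hs v hv) (hs w hw))

theorem spl_soft_weight_subproblem (L lam gam : ℝ) (hL : 0 < L) (hlam : 0 < lam)
    (hgam : 0 < gam) :
    (L ≤ gam * lam / (gam + lam) →
      IsMinOn (fun v : ℝ => L * v - gam * Real.log (v + gam / lam)) (Set.Icc 0 1) 1) ∧
    (lam ≤ L →
      IsMinOn (fun v : ℝ => L * v - gam * Real.log (v + gam / lam)) (Set.Icc 0 1) 0) ∧
    (gam * lam / (gam + lam) < L → L < lam →
      IsMinOn (fun v : ℝ => L * v - gam * Real.log (v + gam / lam)) (Set.Icc 0 1)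
        (gam / L - gam / lam) ∧ (gam / L - gam / lam) ∈ Set.Ioo (0:ℝ) 1) := by
  have hc : 0 < gam / lam := div_pos hgam hlam
  have hpos : ∀ v ∈ Icc (0 : ℝ) 1, 0 < v + gam / lam := fun v hv => by linarith [hv.1]
  have slope_one : gam / (1 + gam / lam) = gam * lam / (gam + lam) := by field_simp; ring
  have slope_zero : gam / (0 + gam / lam) = lam := by field_simp; ring
  have slope_crit : gam / (gam / L - gam / lam + gam / lam) = L := by
    rw [sub_add_cancel, div_div_cancel₀ hgam.ne']
  refine ⟨fun hle => ?_, fun hle => ?_, fun hlow hhigh => ?_⟩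
  · refine isMinOn_mul_sub_mul_log hgam.le hpos (right_mem_Icc.2 zero_le_one) fun v hv => ?_
    rw [slope_one]
    exact mul_nonneg_of_nonpos_of_nonpos (by linarith) (by linarith [hv.2])
  · refine isMinOn_mul_sub_mul_log hgam.le hpos (left_mem_Icc.2 zero_le_one) fun v hv => ?_
    rw [slope_zero]
    exact mul_nonneg (by linarith) (by linarith [hv.1])
  · have hmem : gam / L - gam / lam ∈ Ioo (0 : ℝ) 1 := by
      constructor
      · exact sub_pos.2 (div_lt_div_of_pos_left hgam hL hhigh)
      · rw [sub_lt_iff_lt_add, div_lt_iff₀ hL]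
        rw [div_lt_iff₀ (by positivity)] at hlow
        have hgap : (1 + gam / lam) * L - gam = (L * (gam + lam) - gam * lam) / lam := by
          field_simp; ring
        linarith [div_pos (sub_pos.2 hlow) hlam]
    refine ⟨isMinOn_mul_sub_mul_log hgam.le hpos (Ioo_subset_Icc_self hmem) fun v _ => ?_, hmem⟩
    rw [slope_crit, sub_self, zero_mul]
end

section
/- Let L > 0, λ > 0 and γ = λ/2. Then the soft-weight minimizer of v ↦ L·v − γ·ln(v + γ/λ) on [0,1] equals 1 if L ≤ λ/3, equals 0 if L ≥ λ, and equals λ/(2L) − 1/2 otherwise. -/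
/-!
The objective `v ↦ L v - (λ/2) log (v + 1/2)` is convex, with derivative `L - λ / (2v + 1)`.
So `v₀ ∈ [0, 1]` minimises it on `[0, 1]` when the derivative is `≥ 0` at `v₀ = 0` (i.e. `L ≥ λ`),
`≤ 0` at `v₀ = 1` (i.e. `L ≤ λ/3`), or vanishes at `v₀`, which happens at `v₀ = λ/(2L) - 1/2`.
-/

open Real

lemma Real.log_sub_log_le_div {x y : ℝ} (hx : 0 < x) (hy : 0 < y) :
    log y - log x ≤ (y - x) / x := by
  rw [← log_div hy.ne' hx.ne', sub_div, div_self hx.ne']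
  exact log_le_sub_one_of_pos (div_pos hy hx)

-- `L - c / (v₀ + a)` is the derivative at `v₀`; the objective lies above its tangent line there.
lemma isMinOn_mul_sub_mul_log_add {L c a v₀ : ℝ} {s : Set ℝ} (hc : 0 ≤ c)
    (hs : ∀ v ∈ s, 0 < v + a) (hv₀ : v₀ ∈ s)
    (hderiv : ∀ v ∈ s, 0 ≤ (L - c / (v₀ + a)) * (v - v₀)) :
    IsMinOn (fun v => L * v - c * log (v + a)) s v₀ := by
  intro v hv
  have hv₀a := hs v₀ hv₀
  have hlog : c * (log (v + a) - log (v₀ + a)) ≤ c * ((v - v₀) / (v₀ + a)) := by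
    simpa only [add_sub_add_right_eq_sub] using
      mul_le_mul_of_nonneg_left (log_sub_log_le_div hv₀a (hs v hv)) hc
  have hlin : c * ((v - v₀) / (v₀ + a)) ≤ L * (v - v₀) := by
    have hrw : c * ((v - v₀) / (v₀ + a)) = c / (v₀ + a) * (v - v₀) := by ring
    linarith [hderiv v hv]
  show L * v₀ - c * log (v₀ + a) ≤ L * v - c * log (v + a)
  linarith

theorem spl_soft_weight_half (L lam : ℝ) (hL : 0 < L) (hlam : 0 < lam) :
    (L ≤ lam / 3 →
      IsMinOn (fun v : ℝ => L * v - (lam / 2) * Real.log (v + (lam / 2) / lam))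
        (Set.Icc 0 1) 1) ∧
    (lam ≤ L →
      IsMinOn (fun v : ℝ => L * v - (lam / 2) * Real.log (v + (lam / 2) / lam))
        (Set.Icc 0 1) 0) ∧
    (lam / 3 < L → L < lam →
      IsMinOn (fun v : ℝ => L * v - (lam / 2) * Real.log (v + (lam / 2) / lam))
        (Set.Icc 0 1) (lam / (2 * L) - 1 / 2)) := by
  have hhalf : lam / 2 / lam = 1 / 2 := by field_simp
  have hpos : ∀ v ∈ Set.Icc (0 : ℝ) 1, 0 < v + 1 / 2 := fun v hv => by linarith [hv.1]
  simp only [hhalf]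
  refine ⟨fun hsmall => ?_, fun hlarge => ?_, fun hlow hhigh => ?_⟩
  · refine isMinOn_mul_sub_mul_log_add (by positivity) hpos ⟨zero_le_one, le_rfl⟩ fun v hv => ?_
    have hderiv : L - lam / 2 / (1 + 1 / 2) ≤ 0 := by
      rw [show lam / 2 / (1 + 1 / 2) = lam / 3 by ring]; linarith
    exact mul_nonneg_of_nonpos_of_nonpos hderiv (by linarith [hv.2])
  · refine isMinOn_mul_sub_mul_log_add (by positivity) hpos ⟨le_rfl, zero_le_one⟩ fun v hv => ?_
    have hderiv : 0 ≤ L - lam / 2 / (0 + 1 / 2) := by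
      rw [show lam / 2 / (0 + 1 / 2) = lam by ring]; linarith
    exact mul_nonneg hderiv (by linarith [hv.1])
  · have hmem : lam / (2 * L) - 1 / 2 ∈ Set.Icc (0 : ℝ) 1 := by
      constructor
      · rw [sub_nonneg, le_div_iff₀ (by positivity)]; linarith
      · rw [sub_le_iff_le_add, div_le_iff₀ (by positivity)]; linarith
    refine isMinOn_mul_sub_mul_log_add (by positivity) hpos hmem fun v _ => ?_
    have hderiv : L - lam / 2 / (lam / (2 * L) - 1 / 2 + 1 / 2) = 0 := by
      rw [sub_add_cancel]; field_simp; ring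
    rw [hderiv, zero_mul]
end
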